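/- There is a universal constant C > 0 such that: for every k ∈ ℝ with |k| ≥ 1, every t ≥ 0, and all functions ψ, w : [−1,1] → ℂ with ψ three times continuously differentiable, w twice continuously differentiable, ψ(±1) = 0, w(±1) = 0, and ψ''(y) − k² ψ(y) = −w(y) on (−1,1), the function ψ₁ := ψ' + i k t ψ satisfies |k|² ( ‖ψ₁'‖²_{L²} + k² ‖ψ₁‖²_{L²} )^{1/2} ≤ C (1+t)^{−1} ( ‖(e_{k,t} w)''‖²_{L²} + k² ‖(e_{k,t} w)'‖²_{L²} + k⁴ ‖w‖²_{L²} )^{1/2}, where e_{k,t}(y) = e^{i k y t} and derivatives of e_{k,t} w are taken in y. -/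

import Mathlib

/-!
Write `c = ikt`, so that `ψ₁ = (∂_y + c)ψ` and `∂_y (e^{ikyt} h) = e^{ikyt} (∂_y + c) h`; the
right-hand side is therefore controlled by `W₂ = (∂_y + c)² w` and by `k² ‖w‖`.

Since `ψ''(±1) = k²ψ(±1) - w(±1) = 0`, the function `ψ₁` solves `ψ₁'' - k²ψ₁ = -(∂_y + c)w` with
`ψ₁' = cψ₁` at `±1`. As `c` is imaginary these boundary terms drop out of the energy identity,
and `∂_y + c` is skew-adjoint on functions vanishing at `±1`, so
`‖(∂_y,k)ψ₁‖² = Re⟨ψ₁, (∂_y + c)w⟩ = -Re⟨ψ, W₂⟩ ≤ ‖W₂‖ ‖ψ‖`.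
The decay in `t` comes from `k²t²ψ = -c²ψ = (∂_y - c)ψ₁ - ψ''`, which together with
`k²‖ψ‖ ≤ ‖w‖` and `‖ψ''‖ ≤ 2‖w‖` bounds `k⁴(1+t)²‖ψ‖` by `2P + 6N`, where
`P = k²(1+t)‖(∂_y,k)ψ₁‖` and `N` is the right-hand norm. Hence `P² ≤ N (2P + 6N)`, i.e. `P ≤ 4N`.
-/

open Set

/-- The squared `L²` norm of a function on the interval `(-1, 1)`. -/
noncomputable def L2sq (h : ℝ → ℂ) : ℝ :=
  ∫ y in (-1 : ℝ)..1, ‖h y‖ ^ 2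

noncomputable def ew (k t : ℝ) (w : ℝ → ℂ) : ℝ → ℂ :=
  fun y => Complex.exp (Complex.I * (k : ℂ) * (y : ℂ) * (t : ℂ)) * w y

open MeasureTheory ComplexConjugate
open scoped InnerProductSpace

noncomputable def L2inner (f g : ℝ → ℂ) : ℂ :=
  ∫ y in (-1 : ℝ)..1, conj (f y) * g y

noncomputable def L2norm (f : ℝ → ℂ) : ℝ :=
  √(L2sq f)

/-- `‖(∂_y, a) h‖`. -/
noncomputable def weightedH1Norm (a : ℝ) (h : ℝ → ℂ) : ℝ :=
  √(L2sq (deriv h) + a ^ 2 * L2sq h)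

/-- `‖(∂_y, a)² h‖`. -/
noncomputable def weightedH2Norm (a : ℝ) (h : ℝ → ℂ) : ℝ :=
  √(L2sq (deriv (deriv h)) + a ^ 2 * L2sq (deriv h) + a ^ 4 * L2sq h)

noncomputable def twistedDeriv (c : ℂ) (f : ℝ → ℂ) : ℝ → ℂ :=
  fun y => deriv f y + c * f y

def ScreenedPoisson (k : ℝ) (f g : ℝ → ℂ) : Prop :=
  ∀ y ∈ Ioo (-1 : ℝ) 1, deriv (deriv f) y - (k : ℂ) ^ 2 * f y = -g y

section L2

variable {f g h : ℝ → ℂ}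

lemma L2sq_nonneg (f : ℝ → ℂ) : 0 ≤ L2sq f :=
  intervalIntegral.integral_nonneg (by norm_num) fun _ _ => by positivity

lemma L2norm_nonneg (f : ℝ → ℂ) : 0 ≤ L2norm f :=
  Real.sqrt_nonneg _

lemma L2norm_sq (f : ℝ → ℂ) : L2norm f ^ 2 = L2sq f :=
  Real.sq_sqrt (L2sq_nonneg f)

lemma L2norm_congr (hfg : EqOn f g (Ioo (-1) 1)) : L2norm f = L2norm g := by
  rw [L2norm, L2norm, L2sq, L2sq,
    intervalIntegral.integral_congr_Ioo_of_le (by norm_num) fun y hy => by rw [hfg hy]]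

lemma L2norm_const_smul (a : ℂ) (f : ℝ → ℂ) : L2norm (a • f) = ‖a‖ * L2norm f := by
  simp only [L2norm, L2sq, Pi.smul_apply, smul_eq_mul, norm_mul, mul_pow,
    intervalIntegral.integral_const_mul, Real.sqrt_mul (sq_nonneg _), Real.sqrt_sq (norm_nonneg a)]

lemma L2inner_congr_right (hgh : EqOn g h (Ioo (-1) 1)) : L2inner f g = L2inner f h :=
  intervalIntegral.integral_congr_Ioo_of_le (by norm_num) fun y hy => by rw [hgh hy]

lemma L2inner_self (f : ℝ → ℂ) : L2inner f f = L2sq f := by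
  have hpt : ∀ y, conj (f y) * f y = ((‖f y‖ ^ 2 : ℝ) : ℂ) := fun y => by
    rw [mul_comm, Complex.mul_conj, Complex.normSq_eq_norm_sq]
  simp_rw [L2inner, hpt, intervalIntegral.integral_ofReal]
  rfl

lemma Continuous.memLp_restrict_Ioc (hf : Continuous f) (a b : ℝ) (p : ENNReal) :
    MemLp f p (volume.restrict (Ioc a b)) := by
  obtain ⟨C, hC⟩ := (isCompact_Icc (a := a) (b := b)).exists_bound_of_continuousOn hf.continuousOn
  exact .of_bound hf.aestronglyMeasurable C <| (ae_restrict_iff' measurableSet_Ioc).2 <|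
    .of_forall fun y hy => hC y (Ioc_subset_Icc_self hy)

noncomputable def Continuous.toL2 (hf : Continuous f) : Lp ℂ 2 (volume.restrict (Ioc (-1 : ℝ) 1)) :=
  (hf.memLp_restrict_Ioc _ _ _).toLp f

lemma L2inner_eq_inner (hf : Continuous f) (hg : Continuous g) :
    L2inner f g = ⟪hf.toL2, hg.toL2⟫_ℂ := by
  rw [L2.inner_def, L2inner, intervalIntegral.integral_of_le (by norm_num)]
  refine integral_congr_ae ?_
  filter_upwards [(hf.memLp_restrict_Ioc _ _ _).coeFn_toLp,
    (hg.memLp_restrict_Ioc _ _ _).coeFn_toLp] with y hfy hgy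
  rw [Continuous.toL2, Continuous.toL2, hfy, hgy, RCLike.inner_apply, mul_comm]

lemma L2norm_eq_norm_toL2 (hf : Continuous f) : L2norm f = ‖hf.toL2‖ := by
  have h := L2inner_eq_inner hf hf
  rw [L2inner_self, inner_self_eq_norm_sq_to_K] at h
  rw [L2norm, ← Real.sqrt_sq (norm_nonneg hf.toL2)]
  congr 1
  exact Complex.ofReal_injective (by simpa using h)

lemma norm_L2inner_le (hf : Continuous f) (hg : Continuous g) :
    ‖L2inner f g‖ ≤ L2norm f * L2norm g := by
  rw [L2inner_eq_inner hf hg, L2norm_eq_norm_toL2 hf, L2norm_eq_norm_toL2 hg]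
  exact norm_inner_le_norm _ _

lemma Continuous.toL2_add (hf : Continuous f) (hg : Continuous g) :
    (hf.add hg : Continuous (f + g)).toL2 = hf.toL2 + hg.toL2 :=
  MemLp.toLp_add _ _

lemma Continuous.toL2_sub (hf : Continuous f) (hg : Continuous g) :
    (hf.sub hg : Continuous (f - g)).toL2 = hf.toL2 - hg.toL2 :=
  MemLp.toLp_sub _ _

lemma Continuous.toL2_const_smul (a : ℂ) (hf : Continuous f) :
    (hf.const_smul a : Continuous (a • f)).toL2 = a • hf.toL2 :=
  MemLp.toLp_const_smul _ _

lemma L2norm_sub_le (hf : Continuous f) (hg : Continuous g) :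
    L2norm (f - g) ≤ L2norm f + L2norm g := by
  rw [L2norm_eq_norm_toL2 (hf.sub hg), hf.toL2_sub hg, L2norm_eq_norm_toL2 hf,
    L2norm_eq_norm_toL2 hg]
  exact norm_sub_le _ _

lemma L2inner_add_left (hf : Continuous f) (hg : Continuous g) (hh : Continuous h) :
    L2inner (f + g) h = L2inner f h + L2inner g h := by
  rw [L2inner_eq_inner (hf.add hg) hh, hf.toL2_add hg, inner_add_left,
    ← L2inner_eq_inner, ← L2inner_eq_inner]

lemma L2inner_add_right (hf : Continuous f) (hg : Continuous g) (hh : Continuous h) :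
    L2inner f (g + h) = L2inner f g + L2inner f h := by
  rw [L2inner_eq_inner hf (hg.add hh), hg.toL2_add hh, inner_add_right,
    ← L2inner_eq_inner, ← L2inner_eq_inner]

lemma L2inner_sub_right (hf : Continuous f) (hg : Continuous g) (hh : Continuous h) :
    L2inner f (g - h) = L2inner f g - L2inner f h := by
  rw [L2inner_eq_inner hf (hg.sub hh), hg.toL2_sub hh, inner_sub_right,
    ← L2inner_eq_inner, ← L2inner_eq_inner]

lemma L2inner_smul_left (a : ℂ) (hf : Continuous f) (hg : Continuous g) :
    L2inner (a • f) g = conj a * L2inner f g := by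
  rw [L2inner_eq_inner (hf.const_smul a) hg, hf.toL2_const_smul a, inner_smul_left,
    ← L2inner_eq_inner]

lemma L2inner_smul_right (a : ℂ) (hf : Continuous f) (hg : Continuous g) :
    L2inner f (a • g) = a * L2inner f g := by
  rw [L2inner_eq_inner hf (hg.const_smul a), hg.toL2_const_smul a, inner_smul_right,
    ← L2inner_eq_inner]

lemma L2inner_deriv_right (hf : ContDiff ℝ 1 f) (hg : ContDiff ℝ 1 g) :
    L2inner f (deriv g) = conj (f 1) * g 1 - conj (f (-1)) * g (-1) - L2inner (deriv f) g := by
  have hconj : ∀ y, HasDerivAt (fun z => conj (f z)) (conj (deriv f y)) y := fun y =>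
    (hf.differentiable one_ne_zero y).hasDerivAt.star
  exact intervalIntegral.integral_mul_deriv_eq_deriv_mul (fun y _ => hconj y)
    (fun y _ => (hg.differentiable one_ne_zero y).hasDerivAt)
    ((Complex.continuous_conj.comp hf.continuous_deriv_one).intervalIntegrable _ _)
    (hg.continuous_deriv_one.intervalIntegrable _ _)

end L2

section WeightedNorms

variable (a : ℝ) (h : ℝ → ℂ)

lemma weightedH2Norm_nonneg : 0 ≤ weightedH2Norm a h :=
  Real.sqrt_nonneg _

lemma weightedH1Norm_sq : weightedH1Norm a h ^ 2 = L2sq (deriv h) + a ^ 2 * L2sq h :=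
  Real.sq_sqrt (by have := L2sq_nonneg h; have := L2sq_nonneg (deriv h); positivity)

lemma L2norm_deriv_le_weightedH1Norm : L2norm (deriv h) ≤ weightedH1Norm a h :=
  Real.sqrt_le_sqrt (by have := L2sq_nonneg h; nlinarith)

lemma abs_mul_L2norm_le_weightedH1Norm : |a| * L2norm h ≤ weightedH1Norm a h := by
  rw [L2norm, ← Real.sqrt_sq_eq_abs, ← Real.sqrt_mul (sq_nonneg a)]
  exact Real.sqrt_le_sqrt (by have := L2sq_nonneg (deriv h); linarith)

lemma L2norm_deriv_deriv_le_weightedH2Norm : L2norm (deriv (deriv h)) ≤ weightedH2Norm a h := by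
  refine Real.sqrt_le_sqrt ?_
  linarith [mul_nonneg (sq_nonneg a) (L2sq_nonneg (deriv h)),
    mul_nonneg (show (0 : ℝ) ≤ a ^ 4 by positivity) (L2sq_nonneg h)]

lemma sq_mul_L2norm_le_weightedH2Norm : a ^ 2 * L2norm h ≤ weightedH2Norm a h := by
  rw [L2norm, ← Real.sqrt_sq (sq_nonneg a), ← Real.sqrt_mul (sq_nonneg _)]
  refine Real.sqrt_le_sqrt ?_
  have := L2sq_nonneg (deriv h); have := L2sq_nonneg (deriv (deriv h))
  nlinarith

end WeightedNorms

section TwistedDeriv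

variable {c : ℂ} {f g : ℝ → ℂ}

lemma twistedDeriv_eq (c : ℂ) (f : ℝ → ℂ) : twistedDeriv c f = deriv f + c • f :=
  rfl

lemma ContDiff.twistedDeriv {m n : WithTop ℕ∞} (hf : ContDiff ℝ m f) (c : ℂ) (hnm : n + 1 ≤ m) :
    ContDiff ℝ n (twistedDeriv c f) :=
  (hf.of_le hnm).deriv'.add (contDiff_const.mul (hf.of_le (le_self_add.trans hnm)))

lemma deriv_twistedDeriv (hf : ContDiff ℝ 2 f) :
    deriv (twistedDeriv c f) = twistedDeriv c (deriv f) :=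
  funext fun y => (((hf.deriv' (n := 1)).differentiable one_ne_zero y).hasDerivAt.add
    ((hf.differentiable two_ne_zero y).hasDerivAt.const_mul c)).deriv

lemma deriv_twistedDeriv_eq_mul (hf : ContDiff ℝ 2 f) {y : ℝ} (hfy : f y = 0)
    (hf''y : deriv (deriv f) y = 0) : deriv (twistedDeriv c f) y = c * twistedDeriv c f y := by
  simp [deriv_twistedDeriv hf, twistedDeriv, hfy, hf''y]

lemma sq_norm_mul_L2norm_le (c : ℂ) (hf : ContDiff ℝ 2 f) :
    ‖c‖ ^ 2 * L2norm f ≤ L2norm (deriv (twistedDeriv c f)) + ‖c‖ * L2norm (twistedDeriv c f)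
      + L2norm (deriv (deriv f)) := by
  have hf₁ : ContDiff ℝ 1 (twistedDeriv c f) := hf.twistedDeriv c le_rfl
  have hid : c ^ 2 • f = deriv (deriv f) - (deriv (twistedDeriv c f) - c • twistedDeriv c f) := by
    ext y
    simp only [deriv_twistedDeriv hf, twistedDeriv, Pi.smul_apply, Pi.sub_apply, smul_eq_mul]
    ring
  have hf'' : Continuous (deriv (deriv f)) := (hf.deriv' (n := 1)).continuous_deriv_one
  have h₁ := L2norm_sub_le hf'' (hf₁.continuous_deriv_one.sub (hf₁.continuous.const_smul c))
  have h₂ := L2norm_sub_le hf₁.continuous_deriv_one (hf₁.continuous.const_smul c)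
  rw [← hid, L2norm_const_smul, norm_pow] at h₁
  rw [L2norm_const_smul] at h₂
  linarith

lemma L2inner_twistedDeriv_left (hc : conj c = -c) (hf : ContDiff ℝ 1 f) (hg : ContDiff ℝ 1 g)
    (hf1 : f 1 = 0) (hfm1 : f (-1) = 0) :
    L2inner (twistedDeriv c f) g = -L2inner f (twistedDeriv c g) := by
  have hibp := L2inner_deriv_right hf hg
  simp only [hf1, hfm1, map_zero, zero_mul, sub_zero, zero_sub] at hibp
  have hcf : Continuous (c • f) := hf.continuous.const_smul c
  have hcg : Continuous (c • g) := hg.continuous.const_smul c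
  rw [twistedDeriv_eq, twistedDeriv_eq, L2inner_add_left hf.continuous_deriv_one hcf hg.continuous,
    L2inner_smul_left c hf.continuous hg.continuous,
    L2inner_add_right hf.continuous hg.continuous_deriv_one hcg,
    L2inner_smul_right c hf.continuous hg.continuous, hc, hibp]
  ring

end TwistedDeriv

section ScreenedPoisson

variable {k : ℝ} {c : ℂ} {f g : ℝ → ℂ}

lemma ScreenedPoisson.eqOn_Icc (h : ScreenedPoisson k f g) (hf : ContDiff ℝ 2 f)
    (hg : Continuous g) :
    EqOn (deriv (deriv f)) (fun y => (k : ℂ) ^ 2 * f y - g y) (Icc (-1) 1) := by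
  have hIoo : EqOn (deriv (deriv f)) (fun y => (k : ℂ) ^ 2 * f y - g y) (Ioo (-1) 1) :=
    fun y hy => by linear_combination h y hy
  simpa [closure_Ioo (by norm_num : (-1 : ℝ) ≠ 1)] using
    hIoo.closure (hf.deriv' (n := 1)).continuous_deriv_one
      ((continuous_const.mul hf.continuous).sub hg)

lemma ScreenedPoisson.map_deriv (h : ScreenedPoisson k f g) (hf : ContDiff ℝ 3 f)
    (hg : ContDiff ℝ 1 g) : ScreenedPoisson k (deriv f) (deriv g) := by
  intro y hy
  have hf_y : DifferentiableAt ℝ f y := hf.differentiable (by norm_num) y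
  have hev : deriv (deriv f) =ᶠ[nhds y] fun z => (k : ℂ) ^ 2 * f z - g z :=
    Filter.eventuallyEq_of_mem (isOpen_Ioo.mem_nhds hy) fun z hz => by linear_combination h z hz
  rw [hev.deriv_eq, deriv_fun_sub (hf_y.const_mul _) (hg.differentiable one_ne_zero y),
    deriv_const_mul _ hf_y]
  ring

lemma ScreenedPoisson.map_twistedDeriv (h : ScreenedPoisson k f g) (c : ℂ) (hf : ContDiff ℝ 3 f)
    (hg : ContDiff ℝ 1 g) : ScreenedPoisson k (twistedDeriv c f) (twistedDeriv c g) := by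
  intro y hy
  rw [deriv_twistedDeriv (hf.of_le (by norm_num)), deriv_twistedDeriv (hf.deriv' (n := 2))]
  simp only [twistedDeriv]
  linear_combination h.map_deriv hf hg y hy + c * h y hy

lemma ScreenedPoisson.energy_identity (h : ScreenedPoisson k f g) (hf : ContDiff ℝ 2 f)
    (hg : Continuous g) :
    L2sq (deriv f) + k ^ 2 * L2sq f
      = (L2inner f g).re + (conj (f 1) * deriv f 1).re - (conj (f (-1)) * deriv f (-1)).re := by
  have hibp := L2inner_deriv_right (hf.of_le (by norm_num)) (hf.deriv' (n := 1))
  have hpde : L2inner f (deriv (deriv f)) = ((k ^ 2 * L2sq f : ℝ) : ℂ) - L2inner f g := by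
    rw [L2inner_congr_right (h := (k : ℂ) ^ 2 • f - g) fun y hy => by
        simp only [Pi.sub_apply, Pi.smul_apply, smul_eq_mul]; linear_combination h y hy,
      L2inner_sub_right hf.continuous (hf.continuous.const_smul _) hg,
      L2inner_smul_right _ hf.continuous hf.continuous, L2inner_self]
    push_cast
    rfl
  rw [hpde, L2inner_self] at hibp
  have hre := congrArg Complex.re hibp
  simp only [Complex.sub_re, Complex.ofReal_re] at hre
  linarith

lemma ScreenedPoisson.sq_mul_L2norm_le (h : ScreenedPoisson k f g) (hf : ContDiff ℝ 2 f)
    (hg : Continuous g) (hf1 : f 1 = 0) (hfm1 : f (-1) = 0) : k ^ 2 * L2norm f ≤ L2norm g := by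
  have henergy := h.energy_identity hf hg
  simp only [hf1, hfm1, map_zero, zero_mul, Complex.zero_re, add_zero, sub_zero] at henergy
  have hsq : k ^ 2 * L2norm f * L2norm f ≤ L2norm g * L2norm f :=
    calc k ^ 2 * L2norm f * L2norm f = k ^ 2 * L2sq f := by rw [mul_assoc, ← sq, L2norm_sq]
      _ ≤ (L2inner f g).re := by linarith [L2sq_nonneg (deriv f)]
      _ ≤ ‖L2inner f g‖ := Complex.re_le_norm _
      _ ≤ L2norm g * L2norm f := (norm_L2inner_le hf.continuous hg).trans_eq (mul_comm _ _)
  rcases (L2norm_nonneg f).eq_or_lt with h0 | hpos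
  · rw [← h0, mul_zero]
    exact L2norm_nonneg g
  · exact le_of_mul_le_mul_right hsq hpos

lemma ScreenedPoisson.L2norm_deriv_deriv_le (h : ScreenedPoisson k f g) (hf : Continuous f)
    (hg : Continuous g) : L2norm (deriv (deriv f)) ≤ k ^ 2 * L2norm f + L2norm g := by
  rw [L2norm_congr (g := (k : ℂ) ^ 2 • f - g) fun y hy => by
    simp only [Pi.sub_apply, Pi.smul_apply, smul_eq_mul]; linear_combination h y hy]
  calc _ ≤ L2norm ((k : ℂ) ^ 2 • f) + L2norm g := L2norm_sub_le (hf.const_smul _) hg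
    _ = k ^ 2 * L2norm f + L2norm g := by simp [L2norm_const_smul]

lemma ScreenedPoisson.energy_twistedDeriv_le (h : ScreenedPoisson k f g) (hc : conj c = -c)
    (hf : ContDiff ℝ 3 f) (hg : ContDiff ℝ 2 g) (hf1 : f 1 = 0) (hfm1 : f (-1) = 0)
    (hg1 : g 1 = 0) (hgm1 : g (-1) = 0) :
    L2sq (deriv (twistedDeriv c f)) + k ^ 2 * L2sq (twistedDeriv c f)
      ≤ L2norm (twistedDeriv c (twistedDeriv c g)) * L2norm f := by
  have hf₁ : ContDiff ℝ 2 (twistedDeriv c f) := hf.twistedDeriv c (by norm_num)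
  have hg₁ : ContDiff ℝ 1 (twistedDeriv c g) := hg.twistedDeriv c (by norm_num)
  have hc_re : c.re = 0 := by
    have := congrArg Complex.re hc
    simp only [Complex.conj_re, Complex.neg_re] at this
    linarith
  -- at `±1`, `f'' = k²f - g = 0` turns `(∂_y + c) f` into an eigenfunction of `∂_y`
  have hboundary : ∀ y ∈ Icc (-1 : ℝ) 1, f y = 0 → g y = 0 →
      (conj (twistedDeriv c f y) * deriv (twistedDeriv c f) y).re = 0 := by
    intro y hy hfy hgy
    have hf''y : deriv (deriv f) y = 0 := by
      simpa [hfy, hgy] using h.eqOn_Icc (hf.of_le (by norm_num)) hg.continuous hy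
    rw [deriv_twistedDeriv_eq_mul (hf.of_le (by norm_num)) hfy hf''y, mul_left_comm,
      Complex.conj_mul', ← Complex.ofReal_pow, Complex.re_mul_ofReal, hc_re, zero_mul]
  rw [(h.map_twistedDeriv c hf (hg.of_le (by norm_num))).energy_identity hf₁ hg₁.continuous,
    hboundary 1 (by norm_num) hf1 hg1, hboundary (-1) (by norm_num) hfm1 hgm1,
    L2inner_twistedDeriv_left hc (hf.of_le (by norm_num)) hg₁ hf1 hfm1]
  calc _ = -(L2inner f (twistedDeriv c (twistedDeriv c g))).re := by simp
    _ ≤ ‖L2inner f (twistedDeriv c (twistedDeriv c g))‖ :=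
      (neg_le_abs _).trans (Complex.abs_re_le_norm _)
    _ ≤ _ := (norm_L2inner_le hf.continuous
      (hg₁.twistedDeriv c (n := 0) (by norm_num)).continuous).trans_eq (mul_comm _ _)

lemma ScreenedPoisson.sq_mul_sq_mul_L2norm_le (h : ScreenedPoisson k f g) (hf : ContDiff ℝ 2 f)
    (hg : Continuous g) (hf1 : f 1 = 0) (hfm1 : f (-1) = 0) {t : ℝ} (ht : 0 ≤ t) :
    k ^ 2 * t ^ 2 * L2norm f
      ≤ (1 + t) * weightedH1Norm k (twistedDeriv (Complex.I * k * t) f) + 2 * L2norm g := by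
  set c : ℂ := Complex.I * (k : ℂ) * (t : ℂ)
  have hc : ‖c‖ = |k| * t := by simp [c, abs_of_nonneg ht]
  have hdecay := sq_norm_mul_L2norm_le c hf
  rw [hc, mul_pow, sq_abs] at hdecay
  have hf'' := h.L2norm_deriv_deriv_le hf.continuous hg
  have hfg := h.sq_mul_L2norm_le hf hg hf1 hfm1
  have h₁ := L2norm_deriv_le_weightedH1Norm k (twistedDeriv c f)
  have h₀ := mul_le_mul_of_nonneg_left (abs_mul_L2norm_le_weightedH1Norm k (twistedDeriv c f)) ht
  linarith

end ScreenedPoisson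

lemma L2sq_ew (k t : ℝ) (f : ℝ → ℂ) : L2sq (ew k t f) = L2sq f := by
  simp [L2sq, ew, Complex.norm_exp]

lemma L2norm_ew (k t : ℝ) (f : ℝ → ℂ) : L2norm (ew k t f) = L2norm f := by
  rw [L2norm, L2norm, L2sq_ew]

lemma deriv_ew (k t : ℝ) {f : ℝ → ℂ} (hf : Differentiable ℝ f) :
    deriv (ew k t f) = ew k t (twistedDeriv (Complex.I * k * t) f) := by
  funext y
  have hphase : HasDerivAt (fun z : ℝ => Complex.I * k * z * t) (Complex.I * k * t) y := by
    simpa using ((hasDerivAt_id (y : ℂ)).comp_ofReal.const_mul (Complex.I * k)).mul_const (t : ℂ)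
  refine (hphase.cexp.mul (hf y).hasDerivAt).deriv.trans ?_
  simp only [ew, twistedDeriv]
  ring

lemma le_four_mul_inv_mul_of_estimates {K t S N a b m : ℝ} (hK : 0 ≤ K) (ht : 0 ≤ t)
    (hN : 0 ≤ N) (ha : 0 ≤ a) (hSa : S ^ 2 ≤ b * a) (hbN : b ≤ N) (hmN : K * m ≤ N)
    (ham : K * a ≤ m) (hta : K * t ^ 2 * a ≤ (1 + t) * S + 2 * m) :
    K * S ≤ 4 * (1 + t)⁻¹ * N := by
  set P := K * (1 + t) * S
  have haP : K ^ 2 * (1 + t) ^ 2 * a ≤ 2 * P + 6 * N := by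
    nlinarith [mul_nonneg (mul_nonneg hK ha) (sq_nonneg (1 - t)), mul_le_mul_of_nonneg_left ham hK,
      mul_le_mul_of_nonneg_left hta hK]
  have hP : P ^ 2 ≤ N * (2 * P + 6 * N) :=
    calc P ^ 2 = K ^ 2 * (1 + t) ^ 2 * S ^ 2 := by ring
      _ ≤ K ^ 2 * (1 + t) ^ 2 * (b * a) := by gcongr
      _ = b * (K ^ 2 * (1 + t) ^ 2 * a) := by ring
      _ ≤ N * (2 * P + 6 * N) := by gcongr
  have hP4 : P ≤ 4 * N := by nlinarith
  rw [mul_right_comm, ← div_eq_mul_inv, le_div_iff₀ (by positivity)]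
  linarith [show K * S * (1 + t) = P by ring]

/-- High-frequency estimate for `ψ₁ = ∂_y ψ + ikt ψ`:
`|k|² ‖(∂_y,k)ψ₁‖ ≤ C (1+t)^{-1} ‖(∂_y,k)²(e^{ikyt}w)‖` for `|k| ≥ 1`. -/
theorem psi1_highfreq :
    ∃ C > (0 : ℝ), ∀ (k t : ℝ) (ψ w : ℝ → ℂ),
      1 ≤ |k| → 0 ≤ t →
      ContDiff ℝ 3 ψ → ContDiff ℝ 2 w →
      ψ (-1) = 0 → ψ 1 = 0 → w (-1) = 0 → w 1 = 0 →
      (∀ y ∈ Ioo (-1 : ℝ) 1, deriv (deriv ψ) y - (k : ℂ) ^ 2 * ψ y = -w y) →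
      |k| ^ 2 * Real.sqrt
          (L2sq (deriv (fun y => deriv ψ y + Complex.I * (k : ℂ) * (t : ℂ) * ψ y))
            + k ^ 2 * L2sq (fun y => deriv ψ y + Complex.I * (k : ℂ) * (t : ℂ) * ψ y))
        ≤ C * (1 + t)⁻¹ * Real.sqrt
            (L2sq (deriv (deriv (ew k t w))) + k ^ 2 * L2sq (deriv (ew k t w))
              + k ^ 4 * L2sq w) := by
  refine ⟨4, by norm_num, fun k t ψ w _ ht hψ hw hψm hψp hwm hwp hpde => ?_⟩
  have heq : ScreenedPoisson k ψ w := hpde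
  have hψ₂ : ContDiff ℝ 2 ψ := hψ.of_le (by norm_num)
  have hW₁ : ContDiff ℝ 1 (twistedDeriv (Complex.I * k * t) w) := hw.twistedDeriv _ (by norm_num)
  have hW₂ : L2norm (deriv (deriv (ew k t w)))
      = L2norm (twistedDeriv (Complex.I * k * t) (twistedDeriv (Complex.I * k * t) w)) := by
    rw [deriv_ew k t (hw.differentiable two_ne_zero), deriv_ew k t (hW₁.differentiable one_ne_zero),
      L2norm_ew]
  rw [sq_abs, ← L2sq_ew k t w]
  change k ^ 2 * weightedH1Norm k (twistedDeriv (Complex.I * k * t) ψ)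
    ≤ 4 * (1 + t)⁻¹ * weightedH2Norm k (ew k t w)
  refine le_four_mul_inv_mul_of_estimates (sq_nonneg k) ht (weightedH2Norm_nonneg _ _)
    (L2norm_nonneg ψ) ?_
    (hW₂ ▸ L2norm_deriv_deriv_le_weightedH2Norm k _)
    (L2norm_ew k t w ▸ sq_mul_L2norm_le_weightedH2Norm k _)
    (heq.sq_mul_L2norm_le hψ₂ hw.continuous hψp hψm)
    (heq.sq_mul_sq_mul_L2norm_le hψ₂ hw.continuous hψp hψm ht)
  rw [weightedH1Norm_sq]
  exact heq.energy_twistedDeriv_le (by simp) hψ hw hψp hψm hwp hwm
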